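/- arXiv:math/0312424 — 2 statements merged into one kernel-verified Lean document; each statement's English description precedes it below -/
import Mathlib

section
/- For any rational number μ ≠ 0, if A(x) is the formal power series satisfying A(x) = x e^{A(x)}, then (A(x)/x)^μ = Σ_{n≥0} μ(μ+n)^{n-1} x^n/n!. -/
/-!
Write `exp S` for Mathlib's exponential series substituted at `S`. Then `log (exp S) = S`, because
`log (1 + X)` substituted at `exp X - 1` has derivative `exp X / exp X = 1`, and
`(exp S)^m = exp (m S)`. Since `A / x = exp A`, the claim is `[xⁿ] exp (μ A) = μ (μ + n)^(n-1) / n!`.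
Expanding `exp (μ A) = Σ μ^m A^m / m!` and using `A^m = x^m exp (m A)` expresses this coefficient
through coefficients of lower order of `exp (m A)`, `1 ≤ m ≤ n`. Strong induction on `n`, for all
`μ` at once, reduces the claim to the identity
`μ (μ + n)^(n-1) / n! = Σ_{m=1}^n μ^m / m! · m n^(n-m-1) / (n-m)!`,
which is the binomial expansion of `(μ + n)^(n-1)`.
-/

namespace KGonal2Trees

open PowerSeries

/-- Composition of a power series `F` with `x^d`, i.e. the series `F(x^d)`. -/
noncomputable def compXPow (d : ℕ) (F : PowerSeries ℚ) : PowerSeries ℚ :=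
  PowerSeries.mk fun n => if d ∣ n then PowerSeries.coeff (n / d) F else 0

/-- Exponential `exp(S)` of a power series `S` with zero constant term:
`exp(S) = Σ_{m ≥ 0} S^m / m!` (the coefficient of `x^n` only involves `m ≤ n`). -/
noncomputable def expS (S : PowerSeries ℚ) : PowerSeries ℚ :=
  PowerSeries.mk fun n =>
    ∑ m ∈ Finset.range (n + 1), PowerSeries.coeff n (S ^ m) / (m.factorial : ℚ)

/-- The series `Σ_{i ≥ 1} x^i B(x^i)^(k-1) / i` (the `i`-th term has order `≥ i`, so the
coefficient of `x^n` only involves `1 ≤ i ≤ n`). -/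
noncomputable def seqB (k : ℕ) (B : PowerSeries ℚ) : PowerSeries ℚ :=
  PowerSeries.mk fun n =>
    ∑ i ∈ Finset.Icc 1 n,
      PowerSeries.coeff n (PowerSeries.X ^ i * compXPow i B ^ (k - 1)) / (i : ℚ)


/-- Logarithm `log(F)` of a power series `F` with constant term `1`:
`log F = Σ_{m ≥ 1} (-1)^(m+1) (F-1)^m / m` (the coefficient of `x^n` only involves
`m ≤ n` since `F - 1` has order `≥ 1`). -/
noncomputable def logS (F : PowerSeries ℚ) : PowerSeries ℚ :=
  PowerSeries.mk fun n =>
    ∑ m ∈ Finset.Icc 1 n, (-1 : ℚ) ^ (m + 1) * PowerSeries.coeff n ((F - 1) ^ m) / (m : ℚ)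

end KGonal2Trees

namespace PowerSeries

open Finset

section Subst

variable {R S : Type*} [CommRing R] [CommRing S] [Algebra R S]

theorem coeff_pow_eq_zero_of_lt {b : S⟦X⟧} (hb : constantCoeff b = 0) {n d : ℕ} (h : n < d) :
    coeff n (b ^ d) = 0 :=
  X_pow_dvd_iff.mp (pow_dvd_pow_of_dvd (X_dvd_iff.mpr hb) d) n h

theorem coeff_subst_eq_sum_range {b : S⟦X⟧} (hb : constantCoeff b = 0) (f : R⟦X⟧) (n : ℕ) :
    coeff n (f.subst b) = ∑ d ∈ range (n + 1), coeff d f • coeff n (b ^ d) := by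
  rw [coeff_subst' (HasSubst.of_constantCoeff_zero' hb)]
  refine finsum_eq_sum_of_support_subset _ fun d hd => mem_coe.mpr (mem_range.mpr ?_)
  by_contra! hdn
  exact hd (show coeff d f • coeff n (b ^ d) = 0 by
    rw [coeff_pow_eq_zero_of_lt hb (by omega), smul_zero])

end Subst

section ExpLog

variable {A : Type*} [CommRing A] [Algebra ℚ A]

theorem mk_neg_one_pow_mul_one_add_X :
    (mk fun n => algebraMap ℚ A ((-1) ^ n)) * (1 + X) = 1 := by
  ext n
  rcases n with _ | n
  · simp
  · rw [mul_add, mul_one, map_add, coeff_succ_mul_X]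
    simp [pow_succ]

theorem logOf_exp : logOf (exp A) = X := by
  have := IsAddTorsionFree.of_module_rat (M := A)
  have hE := HasSubst.exp_sub_one (A := A)
  have hinv := congrArg (substAlgHom hE) (mk_neg_one_pow_mul_one_add_X (A := A))
  rw [map_mul, map_add, map_one, substAlgHom_X, coe_substAlgHom, add_sub_cancel] at hinv
  refine derivative.ext ?_ (by rw [constantCoeff_logOf constantCoeff_exp, constantCoeff_X])
  rw [logOf_eq, derivative_subst hE, deriv_log, map_sub, derivative_exp, derivative_one, sub_zero,
    derivative_X]
  exact hinv

theorem logOf_exp_subst {S : A⟦X⟧} (hS : constantCoeff S = 0) :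
    logOf ((exp A).subst S) = S := by
  have hSub := HasSubst.of_constantCoeff_zero' hS
  have hsub_one : (exp A).subst S - 1 = (exp A - 1).subst S := by
    rw [← coe_substAlgHom hSub, map_sub, map_one]
  rw [logOf_eq, hsub_one, ← subst_comp_subst_apply HasSubst.exp_sub_one hSub, ← logOf_eq,
    logOf_exp, subst_X hSub]

theorem exp_subst_pow {S : A⟦X⟧} (hS : constantCoeff S = 0) (k : ℕ) :
    (exp A).subst S ^ k = (exp A).subst ((k : A) • S) := by
  have hSub := HasSubst.of_constantCoeff_zero' hS
  rw [← subst_pow hSub, exp_pow_eq_rescale_exp, rescale_eq_subst,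
    subst_comp_subst_apply (HasSubst.smul_X' _) hSub, subst_smul hSub, subst_X hSub]

end ExpLog

end PowerSeries

namespace KGonal2Trees

open PowerSeries Finset Nat

theorem constantCoeff_expS (S : ℚ⟦X⟧) : constantCoeff (expS S) = 1 := by
  rw [← coeff_zero_eq_constantCoeff_apply]
  simp [expS]

theorem expS_eq_exp_subst {S : ℚ⟦X⟧} (hS : constantCoeff S = 0) : expS S = (exp ℚ).subst S := by
  ext n
  rw [expS, coeff_mk, coeff_subst_eq_sum_range hS]
  exact sum_congr rfl fun m _ => by simp [coeff_exp, div_eq_inv_mul]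

theorem logS_eq_logOf {F : ℚ⟦X⟧} (hF : constantCoeff F = 1) : logS F = logOf F := by
  ext n
  rw [logS, coeff_mk, logOf_eq, coeff_subst_eq_sum_range (by simp [hF]),
    sum_range_eq_add_Ico _ n.succ_pos, coeff_log, if_pos rfl, zero_smul, zero_add]
  refine sum_congr rfl fun m hm => ?_
  have hm0 : m ≠ 0 := Nat.one_le_iff_ne_zero.mp (mem_Ico.mp hm).1
  rw [coeff_log, if_neg hm0, Algebra.algebraMap_self, RingHom.id_apply, smul_eq_mul]
  ring

theorem logS_expS {S : ℚ⟦X⟧} (hS : constantCoeff S = 0) : logS (expS S) = S := by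
  rw [logS_eq_logOf (constantCoeff_expS S), expS_eq_exp_subst hS, logOf_exp_subst hS]

theorem expS_pow {S : ℚ⟦X⟧} (hS : constantCoeff S = 0) (k : ℕ) :
    expS S ^ k = expS ((k : ℚ) • S) := by
  rw [expS_eq_exp_subst hS, expS_eq_exp_subst (by simp [hS]), exp_subst_pow hS]

/-- `(μ + n)^(n-1)` has an integer exponent, so `treePowerCoeff μ 0 = μ * μ⁻¹`, which is `1`
only for `μ ≠ 0`. -/
def treePowerCoeff (μ : ℚ) (n : ℕ) : ℚ := μ * (μ + n) ^ ((n : ℤ) - 1) / n !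

theorem treePowerCoeff_zero {μ : ℚ} (hμ : μ ≠ 0) : treePowerCoeff μ 0 = 1 := by
  simp [treePowerCoeff, hμ]

theorem treePowerCoeff_eq_sum (μ : ℚ) {n : ℕ} (hn : 0 < n) :
    treePowerCoeff μ n =
      ∑ j ∈ range n, μ ^ (j + 1) / (j + 1)! * treePowerCoeff (j + 1 : ℕ) (n - (j + 1)) := by
  obtain ⟨k, rfl⟩ := Nat.exists_eq_succ_of_ne_zero hn.ne'
  have hk : ((k + 1 : ℕ) : ℤ) - 1 = k := by push_cast; ring
  rw [treePowerCoeff, hk, zpow_natCast, add_pow, mul_sum, sum_div]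
  refine sum_congr rfl fun j hj => ?_
  have hjk : j ≤ k := Nat.lt_succ_iff.mp (mem_range.mp hj)
  have hsum : ((j + 1 : ℕ) : ℚ) + ((k + 1 - (j + 1) : ℕ) : ℚ) = (k + 1 : ℕ) := by
    rw [← Nat.cast_add]; congr 1; omega
  have hexp : ((k + 1 - (j + 1) : ℕ) : ℤ) - 1 = (k - j : ℕ) + (-1) := by omega
  rw [treePowerCoeff, hsum, hexp, zpow_add₀ (by positivity), zpow_natCast, zpow_neg_one,
    Nat.cast_choose ℚ hjk, show k + 1 - (j + 1) = k - j by omega]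
  push_cast [Nat.factorial_succ]
  field_simp
  ring

section TreeSeries

variable {A : ℚ⟦X⟧} (hA : A = X * expS A)
include hA

theorem constantCoeff_eq_zero_of_eq_X_mul_expS : constantCoeff A = 0 := by
  rw [hA, map_mul, constantCoeff_X, zero_mul]

theorem pow_eq_X_pow_mul_expS (m : ℕ) : A ^ m = X ^ m * expS ((m : ℚ) • A) := by
  conv_lhs => rw [hA]
  rw [mul_pow, expS_pow (constantCoeff_eq_zero_of_eq_X_mul_expS hA)]

theorem coeff_expS_smul_eq_sum (μ : ℚ) {n : ℕ} (hn : 0 < n) :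
    coeff n (expS (μ • A)) =
      ∑ j ∈ range n, μ ^ (j + 1) / (j + 1)! * coeff (n - (j + 1)) (expS (((j + 1 : ℕ) : ℚ) • A)) := by
  rw [expS, coeff_mk, sum_range_succ', pow_zero, coeff_one, if_neg hn.ne', zero_div, add_zero]
  refine sum_congr rfl fun j hj => ?_
  rw [smul_pow, coeff_smul, pow_eq_X_pow_mul_expS hA, coeff_X_pow_mul',
    if_pos (Nat.succ_le_of_lt (mem_range.mp hj)), smul_eq_mul]
  ring

theorem coeff_expS_smul (n : ℕ) {μ : ℚ} (hμ : μ ≠ 0) :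
    coeff n (expS (μ • A)) = treePowerCoeff μ n := by
  induction n using Nat.strong_induction_on generalizing μ with
  | _ n ih =>
  rcases n.eq_zero_or_pos with rfl | hn
  · rw [coeff_zero_eq_constantCoeff_apply, constantCoeff_expS, treePowerCoeff_zero hμ]
  rw [coeff_expS_smul_eq_sum hA μ hn, treePowerCoeff_eq_sum μ hn]
  refine sum_congr rfl fun j hj => ?_
  rw [ih _ (by have := mem_range.mp hj; omega) (by positivity)]

end TreeSeries

theorem tree_series_rational_power_general (μ : ℚ) (hμ : μ ≠ 0) (A : PowerSeries ℚ)
    (hA : A = PowerSeries.X * expS A) :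
    expS (μ • logS (PowerSeries.mk fun n => PowerSeries.coeff (n + 1) A)) =
      PowerSeries.mk fun n => μ * (μ + (n : ℚ)) ^ ((n : ℤ) - 1) / (n.factorial : ℚ) := by
  have hA_div_X : (mk fun n => coeff (n + 1) A) = expS A := by
    ext n
    rw [coeff_mk, hA, coeff_succ_X_mul, ← hA]
  rw [hA_div_X, logS_expS (constantCoeff_eq_zero_of_eq_X_mul_expS hA)]
  ext n
  rw [coeff_mk]
  exact coeff_expS_smul hA n hμ

/-- For any rational `μ ≠ 0`, if `A(x)` satisfies `A(x) = x e^{A(x)}`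
(with `A(0) = 0`), then `(A(x)/x)^μ = Σ_{n≥0} μ (μ+n)^(n-1) x^n / n!`, where
`F^μ := exp(μ log F)` for a series `F` with constant term `1`.
(Note `(μ+n)^(n-1)` is interpreted with the integer exponent `n - 1 ∈ ℤ`, so that the
`n = 0` term is `μ · μ⁻¹ = 1`.) -/
theorem tree_series_rational_power (μ : ℚ) (hμ : μ ≠ 0) (A : PowerSeries ℚ)
    (hA0 : PowerSeries.constantCoeff A = 0) (hA : A = PowerSeries.X * expS A) :
    expS (μ • logS (PowerSeries.mk fun n => PowerSeries.coeff (n + 1) A)) =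
      PowerSeries.mk fun n => μ * (μ + (n : ℚ)) ^ ((n : ℤ) - 1) / (n.factorial : ℚ) :=
  tree_series_rational_power_general μ hμ A hA
end KGonal2Trees
end

section
/- The totally symmetric page and totally symmetric structure counts satisfy the recurrences: β_0 = 1, π_n = Σ_{i+j=n-1, i even} b^{((k-2)/2)}_{i/2} β_j for n ≥ 1, and β_n = (1/n) Σ_{j=0}^{n-1} β_j Σ_{d | n-j} d π_d for n ≥ 1, where π_n = [x^n] P̃(x), β_n = [x^n] T̃(x), and P̃(x) = x B̃((x^2))^{(k-2)/2} T̃(x), T̃(x) = exp(Σ_{j≥1} P̃(x^j)/j). -/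
/-!
`expS S` is Mathlib's `exp` substituted into `S` (the truncation `m ≤ n` is harmless since
`S ^ m` has order `≥ m`), so the chain rule gives `T' = T S'` for `T = exp S`,
`S = Σ_j P(x^j)/j`. Comparing coefficients of `x T' = T · x S'` yields
`n β_n = Σ_{j<n} β_j (n-j) s_{n-j}`, and `m s_m = Σ_{d ∣ m} d π_d` because `P(x^j)/j` contributes
`π_{m/j} / j` exactly when `j ∣ m`. The formula for `π_n` is the Cauchy product of `x T` with
`B(x²)^((k-2)/2)`, whose odd coefficients vanish.
-/

namespace KGonal2Trees

open PowerSeries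

section

variable {R : Type*} [CommRing R]

theorem coeff_pow_eq_zero_of_lt {S : PowerSeries R} (hS : constantCoeff S = 0) {n m : ℕ}
    (h : n < m) : coeff n (S ^ m) = 0 :=
  X_pow_dvd_iff.mp (pow_dvd_pow_of_dvd (X_dvd_iff.2 hS) m) n h

theorem coeff_expand_mul_eq_sum (p : ℕ) (hp : p ≠ 0) (F G : PowerSeries R) (n : ℕ) :
    coeff n (expand p hp F * G) =
      ∑ i ∈ (Finset.range (n + 1)).filter (p ∣ ·), coeff (i / p) F * coeff (n - i) G := by
  rw [coeff_mul, Finset.Nat.sum_antidiagonal_eq_sum_range_succ_mk, Finset.sum_filter]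
  refine Finset.sum_congr rfl fun i _ => ?_
  rw [coeff_expand]
  split_ifs <;> simp

end

theorem compXPow_eq_expand {d : ℕ} (hd : d ≠ 0) (F : PowerSeries ℚ) :
    compXPow d F = expand d hd F := by
  ext n
  rw [coeff_expand, compXPow, coeff_mk]

theorem expS_eq_subst_exp {S : PowerSeries ℚ} (hS : constantCoeff S = 0) :
    expS S = (exp ℚ).subst S := by
  ext n
  rw [coeff_subst' (HasSubst.of_constantCoeff_zero' hS),
    finsum_eq_sum_of_support_subset (s := Finset.range (n + 1)), expS, coeff_mk]
  · refine Finset.sum_congr rfl fun m _ => ?_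
    rw [coeff_exp, smul_eq_mul]
    simp [div_eq_inv_mul]
  · intro m hm
    rw [Finset.coe_range, Set.mem_Iio]
    by_contra! hmn
    exact hm (by simp only [coeff_pow_eq_zero_of_lt hS hmn, smul_zero])

theorem derivative_expS {S : PowerSeries ℚ} (hS : constantCoeff S = 0) :
    d⁄dX ℚ (expS S) = expS S * d⁄dX ℚ S := by
  rw [expS_eq_subst_exp hS, derivative_subst (HasSubst.of_constantCoeff_zero' hS), derivative_exp]

theorem natCast_mul_coeff_expS {S : PowerSeries ℚ} (hS : constantCoeff S = 0) (n : ℕ) :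
    n * coeff n (expS S) =
      ∑ j ∈ Finset.range n, coeff j (expS S) * ((n - j : ℕ) * coeff (n - j) S) := by
  cases n with
  | zero => simp
  | succ n =>
    have h := congrArg (coeff n) (derivative_expS hS)
    rw [coeff_derivative, coeff_mul, Finset.Nat.sum_antidiagonal_eq_sum_range_succ_mk] at h
    rw [mul_comm, Nat.cast_succ, h]
    refine Finset.sum_congr rfl fun j hj => ?_
    have hj : j ≤ n := Nat.lt_succ_iff.mp (Finset.mem_range.mp hj)
    rw [coeff_derivative, Nat.sub_add_comm hj, Nat.cast_succ, mul_comm (coeff _ S)]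

noncomputable def plethysticSum (P : PowerSeries ℚ) : PowerSeries ℚ :=
  PowerSeries.mk fun n => ∑ j ∈ Finset.Icc 1 n, coeff n (compXPow j P) / (j : ℚ)

theorem constantCoeff_plethysticSum (P : PowerSeries ℚ) : constantCoeff (plethysticSum P) = 0 := by
  rw [← coeff_zero_eq_constantCoeff_apply, plethysticSum, coeff_mk]
  simp

theorem natCast_mul_coeff_plethysticSum (P : PowerSeries ℚ) (m : ℕ) :
    m * coeff m (plethysticSum P) = ∑ d ∈ m.divisors, (d : ℚ) * coeff d P := by
  have hterm : ∀ j ∈ Finset.Icc 1 m, (m : ℚ) * (coeff m (compXPow j P) / j) =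
      if j ∣ m then ((m / j : ℕ) : ℚ) * coeff (m / j) P else 0 := by
    intro j hj
    have hj : j ≠ 0 := Nat.one_le_iff_ne_zero.mp (Finset.mem_Icc.mp hj).1
    rw [compXPow, coeff_mk]
    split_ifs with h
    · rw [Nat.cast_div h (Nat.cast_ne_zero.2 hj)]
      ring
    · simp
  have hdivisors : (Finset.Icc 1 m).filter (· ∣ m) = m.divisors := by
    ext d
    simp only [Finset.mem_filter, Finset.mem_Icc, Nat.mem_divisors]
    constructor
    · rintro ⟨⟨_, _⟩, hd⟩
      exact ⟨hd, by omega⟩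
    · rintro ⟨hd, hm⟩
      exact ⟨⟨Nat.pos_of_dvd_of_pos hd (by omega), Nat.le_of_dvd (by omega) hd⟩, hd⟩
  rw [plethysticSum, coeff_mk, Finset.mul_sum, Finset.sum_congr rfl hterm, ← Finset.sum_filter,
    hdivisors, Nat.sum_div_divisors m fun d => (d : ℚ) * coeff d P]

theorem totally_symmetric_recurrences_general (k : ℕ)
    (B P T : PowerSeries ℚ)
    (hP : P = PowerSeries.X * compXPow 2 B ^ ((k - 2) / 2) * T)
    (hT : T = expS (PowerSeries.mk fun n =>
      ∑ j ∈ Finset.Icc 1 n, PowerSeries.coeff n (compXPow j P) / (j : ℚ))) :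
    PowerSeries.coeff 0 T = 1 ∧
    (∀ n : ℕ, 1 ≤ n →
      PowerSeries.coeff n P =
        ∑ i ∈ (Finset.range n).filter (fun i => 2 ∣ i),
          PowerSeries.coeff (i / 2) (B ^ ((k - 2) / 2)) *
            PowerSeries.coeff (n - 1 - i) T) ∧
    ∀ n : ℕ, 1 ≤ n →
      PowerSeries.coeff n T =
        (1 / (n : ℚ)) * ∑ j ∈ Finset.range n,
          PowerSeries.coeff j T *
            ∑ d ∈ (n - j).divisors, (d : ℚ) * PowerSeries.coeff d P := by
  change T = expS (plethysticSum P) at hT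
  refine ⟨by simp [hT, expS], fun n hn => ?_, fun n hn => ?_⟩
  · obtain ⟨n, rfl⟩ := Nat.exists_eq_add_of_le' hn
    rw [hP, compXPow_eq_expand two_ne_zero, ← map_pow, mul_assoc, coeff_succ_X_mul,
      coeff_expand_mul_eq_sum, Nat.add_sub_cancel]
  · have hrec := natCast_mul_coeff_expS (constantCoeff_plethysticSum P) n
    simp only [← hT, natCast_mul_coeff_plethysticSum] at hrec
    rw [← hrec, one_div, inv_mul_cancel_left₀ (by exact_mod_cast (by omega : n ≠ 0))]

/-- For even `k ≥ 4`: if `P̃(x) = x B̃(x²)^((k-2)/2) T̃(x)` and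
`T̃(x) = exp(Σ_{j≥1} P̃(x^j)/j)`, then the coefficients `π_n = [xⁿ]P̃` and `β_n = [xⁿ]T̃`
satisfy `β_0 = 1`, `π_n = Σ_{i+j=n-1, i even} b^{((k-2)/2)}_{i/2} β_j`, and
`β_n = (1/n) Σ_{j=0}^{n-1} β_j Σ_{d ∣ n-j} d π_d`. -/
theorem totally_symmetric_recurrences (k : ℕ) (hk : 4 ≤ k) (heven : Even k)
    (B P T : PowerSeries ℚ)
    (hB : B = expS (seqB k B))
    (hP : P = PowerSeries.X * compXPow 2 B ^ ((k - 2) / 2) * T)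
    (hT : T = expS (PowerSeries.mk fun n =>
      ∑ j ∈ Finset.Icc 1 n, PowerSeries.coeff n (compXPow j P) / (j : ℚ))) :
    PowerSeries.coeff 0 T = 1 ∧
    (∀ n : ℕ, 1 ≤ n →
      PowerSeries.coeff n P =
        ∑ i ∈ (Finset.range n).filter (fun i => 2 ∣ i),
          PowerSeries.coeff (i / 2) (B ^ ((k - 2) / 2)) *
            PowerSeries.coeff (n - 1 - i) T) ∧
    ∀ n : ℕ, 1 ≤ n →
      PowerSeries.coeff n T =
        (1 / (n : ℚ)) * ∑ j ∈ Finset.range n,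
          PowerSeries.coeff j T *
            ∑ d ∈ (n - j).divisors, (d : ℚ) * PowerSeries.coeff d P :=
  totally_symmetric_recurrences_general k B P T hP hT

end KGonal2Trees
end
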